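/- arXiv:2308.06188 — 5 statements merged into one kernel-verified Lean document; each statement's English description precedes it below -/
import Mathlib

section
/- For any multi-index μ in the set F of finitely supported sequences of nonnegative integers, the sum over ν ≤ μ of the binomial coefficient C(μ,ν) times |ν|! times |μ−ν|! equals (|μ|+1)!, where |μ| denotes the total degree ∑_j μ_j and C(μ,ν) = ∏_j C(μ_j,ν_j). -/
open Finset Polynomial

private lemma Iic_eq_map (μ : ℕ →₀ ℕ) :
    Finset.Iic μ = (μ.support.pi fun j => Finset.Iic (μ j)).map
      ⟨Finsupp.indicator μ.support, Finsupp.indicator_injective μ.support⟩ := by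
  classical
  ext ν
  simp only [Finset.mem_map, Function.Embedding.coeFn_mk, Finset.mem_pi, Finset.mem_Iic]
  constructor
  · intro h
    refine ⟨fun j _ => ν j, fun j hj => h j, ?_⟩
    ext j
    by_cases hj : j ∈ μ.support
    · rw [Finsupp.indicator_of_mem hj]
    · rw [Finsupp.indicator_of_notMem hj]
      have := h j
      rw [Finsupp.notMem_support_iff.1 hj] at this
      exact (Nat.le_zero.1 this).symm
  · rintro ⟨p, hp, rfl⟩ j
    by_cases hj : j ∈ μ.support
    · rw [Finsupp.indicator_of_mem hj]; exact hp j hj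
    · rw [Finsupp.indicator_of_notMem hj]; exact Nat.zero_le _

private lemma keyP (μ : ℕ →₀ ℕ) :
    ∑ ν ∈ Finset.Iic μ,
      ((∏ j ∈ μ.support, Nat.choose (μ j) (ν j) : ℕ) : Polynomial ℕ) *
        Polynomial.X ^ (ν.sum fun _ n => n)
      = (Polynomial.X + 1) ^ (μ.sum fun _ n => n) := by
  classical
  have hrhs : ((Polynomial.X + 1 : Polynomial ℕ)) ^ (μ.sum fun _ n => n)
      = ∏ j ∈ μ.support, (Polynomial.X + 1) ^ (μ j) := by
    rw [Finset.prod_pow_eq_pow_sum]; rfl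
  have hbin : ∀ n : ℕ, ((Polynomial.X + 1 : Polynomial ℕ)) ^ n
      = ∑ i ∈ Finset.Iic n, (n.choose i : Polynomial ℕ) * Polynomial.X ^ i := by
    intro n
    rw [add_pow]
    have : Finset.Iic n = Finset.range (n + 1) := by ext i; simp [Nat.lt_succ_iff]
    rw [this]
    refine Finset.sum_congr rfl fun i _ => ?_
    rw [one_pow]
    ring
  rw [hrhs]
  simp_rw [hbin]
  rw [Finset.prod_sum]
  rw [Iic_eq_map, Finset.sum_map]
  refine Finset.sum_congr rfl fun p hp => ?_
  simp only [Function.Embedding.coeFn_mk]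
  have hsum : ((Finsupp.indicator μ.support p).sum fun _ n => n)
      = ∑ j ∈ μ.support.attach, p j.1 j.2 := by
    rw [Finsupp.sum_of_support_subset _ (Finsupp.support_indicator_subset _ _) _
      (fun _ _ => rfl), ← Finset.sum_attach]
    exact Finset.sum_congr rfl fun j _ => by rw [Finsupp.indicator_of_mem j.2]
  rw [hsum, ← Finset.prod_pow_eq_pow_sum, Nat.cast_prod,
    ← Finset.prod_attach (f := fun j => ((μ j).choose ((Finsupp.indicator μ.support p) j) :
      Polynomial ℕ)), ← Finset.prod_mul_distrib]
  refine Finset.prod_congr rfl fun j _ => by rw [Finsupp.indicator_of_mem j.2]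

private lemma lemA (μ : ℕ →₀ ℕ) (k : ℕ) :
    ∑ ν ∈ Finset.Iic μ,
      (if (ν.sum fun _ n => n) = k then ∏ j ∈ μ.support, Nat.choose (μ j) (ν j) else 0)
      = Nat.choose (μ.sum fun _ n => n) k := by
  have := congrArg (fun P : Polynomial ℕ => P.coeff k) (keyP μ)
  simp only [Polynomial.finset_sum_coeff, Polynomial.coeff_natCast_mul,
    Polynomial.coeff_X_pow, Polynomial.coeff_X_add_one_pow, mul_ite, mul_one, mul_zero,
    Nat.cast_id] at this
  rw [← this]
  exact Finset.sum_congr rfl fun ν _ => if_congr eq_comm rfl rfl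

/-- Multinomial summation lemma, case `N = 2`: for any multi-index `μ`
(finitely supported sequence of naturals),
`∑_{ν ≤ μ} C(μ,ν) |ν|! |μ−ν|! = (|μ|+1)!`. -/
theorem multi_index_binomial_factorial_sum (μ : ℕ →₀ ℕ) :
    ∑ ν ∈ Finset.Iic μ,
      (∏ j ∈ μ.support, Nat.choose (μ j) (ν j)) *
        Nat.factorial (ν.sum fun _ n => n) *
        Nat.factorial ((μ - ν).sum fun _ n => n)
      = Nat.factorial ((μ.sum fun _ n => n) + 1) := by
  classical
  set n := μ.sum fun _ m => m with hn
  have hle : ∀ ν ∈ Finset.Iic μ, (ν.sum fun _ m => m) ≤ n ∧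
      ((μ - ν).sum fun _ m => m) = n - (ν.sum fun _ m => m) := by
    intro ν hν
    rw [Finset.mem_Iic] at hν
    have hadd : ((μ - ν).sum fun _ m => m) + (ν.sum fun _ m => m) = n := by
      rw [hn, ← Finsupp.sum_add_index' (fun _ => rfl) (fun _ a b => rfl),
        tsub_add_cancel_of_le hν]
    omega
  calc ∑ ν ∈ Finset.Iic μ,
      (∏ j ∈ μ.support, Nat.choose (μ j) (ν j)) *
        Nat.factorial (ν.sum fun _ m => m) *
        Nat.factorial ((μ - ν).sum fun _ m => m)
      = ∑ ν ∈ Finset.Iic μ, ∑ k ∈ Finset.range (n + 1),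
          (if (ν.sum fun _ m => m) = k then ∏ j ∈ μ.support, Nat.choose (μ j) (ν j) else 0) *
            (Nat.factorial k * Nat.factorial (n - k)) := by
        refine Finset.sum_congr rfl fun ν hν => ?_
        obtain ⟨h1, h2⟩ := hle ν hν
        rw [Finset.sum_eq_single (ν.sum fun _ m => m)]
        · simp [h2, mul_assoc]
        · intro k _ hk; rw [if_neg (fun h => hk h.symm), zero_mul]
        · intro h; exact absurd (Finset.mem_range.2 (Nat.lt_succ_of_le h1)) h
    _ = ∑ k ∈ Finset.range (n + 1),
          (∑ ν ∈ Finset.Iic μ,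
            if (ν.sum fun _ m => m) = k then ∏ j ∈ μ.support, Nat.choose (μ j) (ν j) else 0) *
            (Nat.factorial k * Nat.factorial (n - k)) := by
        rw [Finset.sum_comm]
        simp [Finset.sum_mul]
    _ = ∑ k ∈ Finset.range (n + 1), Nat.factorial n := by
        refine Finset.sum_congr rfl fun k hk => ?_
        rw [lemA]
        rw [← mul_assoc]
        exact Nat.choose_mul_factorial_mul_factorial (Nat.lt_succ_iff.1 (Finset.mem_range.1 hk))
    _ = Nat.factorial (n + 1) := by
        rw [Finset.sum_const, Finset.card_range, smul_eq_mul, Nat.factorial_succ]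
end

section
/- For any multi-index μ, the sum over all triples (ν¹, ν², ν³) of multi-indices with ν¹ + ν² + ν³ = μ of the multinomial coefficient C(μ; ν¹,ν²,ν³) times |ν¹|! |ν²|! |ν³|! equals (|μ|+2)!/2. -/
open Finset

private def S' (ν : ℕ →₀ ℕ) : ℕ := ν.sum fun _ n => n

private lemma S'_add (ρ τ : ℕ →₀ ℕ) : S' (ρ + τ) = S' ρ + S' τ :=
  Finsupp.sum_add_index' (fun _ => rfl) (fun _ _ _ => rfl)

private lemma S'_sub {ρ σ : ℕ →₀ ℕ} (h : ρ ≤ σ) : S' (σ - ρ) = S' σ - S' ρ := by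
  have h1 : σ - ρ + ρ = σ := tsub_add_cancel_of_le h
  have := S'_add (σ - ρ) ρ
  rw [h1] at this
  omega

private lemma S'_le {ρ σ : ℕ →₀ ℕ} (h : ρ ≤ σ) : S' ρ ≤ S' σ := by
  have h1 : σ - ρ + ρ = σ := tsub_add_cancel_of_le h
  have := S'_add (σ - ρ) ρ
  rw [h1] at this
  omega

private lemma nat_vmd (b n : ℕ) (f : ℕ → ℕ) :
    ∑ m ∈ range (b + 1), ∑ k ∈ range (n + 1),
        b.choose m * (n.choose k * f (m + k))
      = ∑ t ∈ range (b + n + 1), (b + n).choose t * f t := by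
  set F : ℕ × ℕ → ℕ := fun p => b.choose p.1 * (n.choose p.2 * f (p.1 + p.2)) with hF
  have hrect : ∑ m ∈ range (b + 1), ∑ k ∈ range (n + 1),
      b.choose m * (n.choose k * f (m + k)) = ∑ p ∈ range (b + 1) ×ˢ range (n + 1), F p := by
    rw [Finset.sum_product]
  have htri : ∑ t ∈ range (b + n + 1), (b + n).choose t * f t
      = ∑ p ∈ (range (b + n + 1)).biUnion Finset.HasAntidiagonal.antidiagonal, F p := by
    rw [Finset.sum_biUnion]
    · refine Finset.sum_congr rfl fun t _ => ?_
      rw [Nat.add_choose_eq, Finset.sum_mul]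
      refine Finset.sum_congr rfl fun p hp => ?_
      rw [Finset.HasAntidiagonal.mem_antidiagonal] at hp
      simp [hF, hp, mul_assoc]
    · intro t1 _ t2 _ hne
      simp only [Finset.disjoint_left]
      intro p hp1 hp2
      rw [Finset.HasAntidiagonal.mem_antidiagonal] at hp1 hp2
      exact hne (hp1 ▸ hp2 ▸ rfl)
  rw [hrect, htri]
  have big : Finset (ℕ × ℕ) := range (b + n + 1) ×ˢ range (b + n + 1)
  rw [show (range (b + 1) ×ˢ range (n + 1) : Finset (ℕ × ℕ)).sum F
      = (range (b + n + 1) ×ˢ range (b + n + 1)).sum F from ?_,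
    show ((range (b + n + 1)).biUnion Finset.HasAntidiagonal.antidiagonal).sum F
      = (range (b + n + 1) ×ˢ range (b + n + 1)).sum F from ?_]
  · apply Finset.sum_subset
    · intro p hp
      simp only [Finset.mem_biUnion, Finset.mem_product, Finset.mem_range] at hp ⊢
      obtain ⟨t, ht, hpt⟩ := hp
      rw [Finset.HasAntidiagonal.mem_antidiagonal] at hpt
      omega
    · intro p hp hnp
      simp only [Finset.mem_biUnion, Finset.mem_product, Finset.mem_range] at hp hnp
      have : ¬ (p.1 + p.2 ≤ b + n) := by
        intro h
        exact hnp ⟨p.1 + p.2, by omega, Finset.HasAntidiagonal.mem_antidiagonal.2 rfl⟩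
      have : b < p.1 ∨ n < p.2 := by omega
      rcases this with h | h
      · simp [hF, Nat.choose_eq_zero_of_lt h]
      · simp [hF, Nat.choose_eq_zero_of_lt h]
  · apply Finset.sum_subset
    · intro p hp
      simp only [Finset.mem_product, Finset.mem_range] at hp ⊢
      omega
    · intro p hp hnp
      simp only [Finset.mem_product, Finset.mem_range] at hp hnp
      have : b < p.1 ∨ n < p.2 := by omega
      rcases this with h | h
      · simp [hF, Nat.choose_eq_zero_of_lt h]
      · simp [hF, Nat.choose_eq_zero_of_lt h]

private lemma finsupp_vmd (σ : ℕ →₀ ℕ) :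
    ∀ f : ℕ → ℕ,
      ∑ ν ∈ Finset.Iic σ, (∏ j ∈ σ.support, (σ j).choose (ν j)) * f (S' ν)
        = ∑ k ∈ range (S' σ + 1), (S' σ).choose k * f k := by
  induction σ using Finsupp.induction with
  | zero =>
    intro f
    have h0 : (Finset.Iic (0 : ℕ →₀ ℕ)) = {0} := by
      ext ν; simp [Finset.mem_Iic, le_zero_iff]
    simp [h0, S']
  | single_add a b σ ha hb IH =>
    intro f
    have hσa : σ a = 0 := Finsupp.notMem_support_iff.1 ha
    have hdisj : Disjoint (Finsupp.single a b).support σ.support := by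
      rw [Finsupp.support_single_ne_zero _ hb]
      simpa using ha
    have hsupp : (Finsupp.single a b + σ).support = insert a σ.support := by
      rw [Finsupp.support_add_eq hdisj, Finsupp.support_single_ne_zero _ hb,
        ← Finset.insert_eq]
    have hS : S' (Finsupp.single a b + σ) = b + S' σ := by
      rw [S'_add]
      simp [S', Finsupp.sum_single_index]
    rw [hS]
    have key : ∑ ν ∈ Finset.Iic (Finsupp.single a b + σ),
        (∏ j ∈ (Finsupp.single a b + σ).support,
          ((Finsupp.single a b + σ) j).choose (ν j)) * f (S' ν)
        = ∑ p ∈ range (b + 1) ×ˢ Finset.Iic σ,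
            b.choose p.1 * ((∏ j ∈ σ.support, (σ j).choose (p.2 j)) * f (p.1 + S' p.2)) := by
      refine Finset.sum_nbij' (i := fun ν => (ν a, ν.erase a))
        (j := fun p => Finsupp.single a p.1 + p.2) ?_ ?_ ?_ ?_ ?_
      · intro ν hν
        rw [Finset.mem_Iic] at hν
        have hle := Finsupp.le_def.1 hν
        simp only [Finset.mem_product, Finset.mem_range, Finset.mem_Iic]
        constructor
        · have := hle a
          simp [hσa] at this
          omega
        · rw [Finsupp.le_def]
          intro j
          by_cases hj : j = a
          · simp [hj]
          · have := hle j
            simp [Finsupp.single_apply, Ne.symm hj, hj] at this ⊢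
            exact this
      · intro p hp
        simp only [Finset.mem_product, Finset.mem_range, Finset.mem_Iic] at hp ⊢
        rw [Finsupp.le_def]
        intro j
        by_cases hj : j = a
        · subst hj
          have : p.2 j ≤ σ j := Finsupp.le_def.1 hp.2 j
          simp_all [Finsupp.single_apply]
        · have : p.2 j ≤ σ j := Finsupp.le_def.1 hp.2 j
          have hj' : a ≠ j := Ne.symm hj
          simp [Finsupp.single_apply, hj']
          omega
      · intro ν hν
        simp only
        exact Finsupp.single_add_erase a ν
      · intro p hp
        simp only [Finset.mem_product, Finset.mem_range, Finset.mem_Iic] at hp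
        have hp2a : p.2 a = 0 := by
          have : p.2 a ≤ σ a := Finsupp.le_def.1 hp.2 a
          omega
        have h1 : ((Finsupp.single a p.1) + p.2) a = p.1 := by simp [hp2a]
        have h2 : (Finsupp.single a p.1 + p.2).erase a = p.2 := by
          ext j
          by_cases hj : j = a
          · simp [hj, hp2a]
          · have hj' : a ≠ j := Ne.symm hj
            simp [Finsupp.erase_ne hj, Finsupp.single_apply, hj']
        simp only [Prod.ext_iff]
        exact ⟨h1, h2⟩
      · intro ν hν
        rw [Finset.mem_Iic] at hν
        have hle := Finsupp.le_def.1 hν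
        have hSν : S' ν = ν a + S' (ν.erase a) := by
          conv_lhs => rw [← Finsupp.single_add_erase a ν]
          rw [S'_add]
          simp [S', Finsupp.sum_single_index]
        rw [hsupp, Finset.prod_insert ha, hSν]
        have hva : (Finsupp.single a b + σ) a = b := by
          simp [hσa]
        have hprod : ∀ j ∈ σ.support,
            ((Finsupp.single a b + σ) j).choose (ν j)
              = (σ j).choose ((ν.erase a) j) := by
          intro j hj
          have hj' : j ≠ a := fun h => ha (h ▸ hj)
          simp [Finsupp.single_apply, Ne.symm hj', Finsupp.erase_ne hj']
        rw [hva, Finset.prod_congr rfl hprod, mul_assoc]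
    rw [key, Finset.sum_product]
    have : ∀ m ∈ range (b + 1),
        ∑ ρ ∈ Finset.Iic σ,
          b.choose m * ((∏ j ∈ σ.support, (σ j).choose (ρ j)) * f (m + S' ρ))
        = ∑ k ∈ range (S' σ + 1), b.choose m * ((S' σ).choose k * f (m + k)) := by
      intro m _
      rw [← Finset.mul_sum, IH (fun k => f (m + k)), Finset.mul_sum]
    rw [Finset.sum_congr rfl this]
    exact nat_vmd b (S' σ) f

/-- Multinomial summation lemma, case `N = 3`: for any multi-index `μ`,
`∑_{ν¹+ν²+ν³=μ} C(μ;ν¹,ν²,ν³) |ν¹|! |ν²|! |ν³|! = (|μ|+2)!/2`.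
The sum over triples is parameterized by `ν¹ ≤ μ` and `ν² ≤ μ − ν¹`, with
`ν³ = μ − ν¹ − ν²`; the multinomial coefficient
`∏_j μ_j!/(ν¹_j! ν²_j! ν³_j!)` is written as a product of binomials. -/
theorem multi_index_trinomial_factorial_sum (μ : ℕ →₀ ℕ) :
    ∑ ν₁ ∈ Finset.Iic μ, ∑ ν₂ ∈ Finset.Iic (μ - ν₁),
      (∏ j ∈ μ.support,
          Nat.choose (μ j) (ν₁ j) * Nat.choose ((μ - ν₁) j) (ν₂ j)) *
        Nat.factorial (ν₁.sum fun _ n => n) *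
        Nat.factorial (ν₂.sum fun _ n => n) *
        Nat.factorial ((μ - ν₁ - ν₂).sum fun _ n => n)
      = Nat.factorial ((μ.sum fun _ n => n) + 2) / 2 := by
  show ∑ ν₁ ∈ Finset.Iic μ, ∑ ν₂ ∈ Finset.Iic (μ - ν₁),
      (∏ j ∈ μ.support, (μ j).choose (ν₁ j) * ((μ - ν₁) j).choose (ν₂ j)) *
        (S' ν₁).factorial * (S' ν₂).factorial * (S' (μ - ν₁ - ν₂)).factorial
      = (S' μ + 2).factorial / 2
  have inner : ∀ ν₁ ∈ Finset.Iic μ,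
      ∑ ν₂ ∈ Finset.Iic (μ - ν₁),
        (∏ j ∈ μ.support, (μ j).choose (ν₁ j) * ((μ - ν₁) j).choose (ν₂ j)) *
          (S' ν₁).factorial * (S' ν₂).factorial * (S' (μ - ν₁ - ν₂)).factorial
      = (∏ j ∈ μ.support, (μ j).choose (ν₁ j)) *
          ((S' ν₁).factorial * (S' (μ - ν₁) + 1).factorial) := by
    intro ν₁ hν₁
    rw [Finset.mem_Iic] at hν₁
    set σ := μ - ν₁ with hσ
    have step1 : ∀ ν₂ ∈ Finset.Iic σ,
        (∏ j ∈ μ.support, (μ j).choose (ν₁ j) * (σ j).choose (ν₂ j)) *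
          (S' ν₁).factorial * (S' ν₂).factorial * (S' (σ - ν₂)).factorial
        = ((∏ j ∈ μ.support, (μ j).choose (ν₁ j)) * (S' ν₁).factorial) *
            ((∏ j ∈ σ.support, (σ j).choose (ν₂ j)) *
              ((S' ν₂).factorial * (S' σ - S' ν₂).factorial)) := by
      intro ν₂ hν₂
      rw [Finset.mem_Iic] at hν₂
      have hprod : ∏ j ∈ μ.support, (σ j).choose (ν₂ j)
          = ∏ j ∈ σ.support, (σ j).choose (ν₂ j) := by
        refine (Finset.prod_subset (Finsupp.support_tsub) ?_).symm
        intro j _ hj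
        have h0 : σ j = 0 := Finsupp.notMem_support_iff.1 hj
        have h2 : ν₂ j = 0 := by
          have := Finsupp.le_def.1 hν₂ j; omega
        simp [h0, h2]
      rw [Finset.prod_mul_distrib, hprod, S'_sub hν₂]
      ring
    rw [Finset.sum_congr rfl step1, ← Finset.mul_sum,
      finsupp_vmd σ (fun k => k.factorial * (S' σ - k).factorial)]
    have : ∑ k ∈ Finset.range (S' σ + 1),
        (S' σ).choose k * (k.factorial * (S' σ - k).factorial)
        = (S' σ + 1).factorial := by
      have h1 : ∀ k ∈ Finset.range (S' σ + 1),
          (S' σ).choose k * (k.factorial * (S' σ - k).factorial) = (S' σ).factorial := by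
        intro k hk
        rw [Finset.mem_range] at hk
        rw [← mul_assoc]
        exact Nat.choose_mul_factorial_mul_factorial (by omega)
      rw [Finset.sum_congr rfl h1, Finset.sum_const, Finset.card_range, smul_eq_mul,
        Nat.factorial_succ]
    rw [this, mul_assoc]
  rw [Finset.sum_congr rfl (fun ν₁ hν₁ => inner ν₁ hν₁)]
  set n := S' μ with hn
  have hout : ∀ ν₁ ∈ Finset.Iic μ,
      (∏ j ∈ μ.support, (μ j).choose (ν₁ j)) *
          ((S' ν₁).factorial * (S' (μ - ν₁) + 1).factorial)
      = (∏ j ∈ μ.support, (μ j).choose (ν₁ j)) *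
          ((fun k => k.factorial * (n - k + 1).factorial) (S' ν₁)) := by
    intro ν₁ hν₁
    rw [Finset.mem_Iic] at hν₁
    rw [S'_sub hν₁]
  rw [Finset.sum_congr rfl hout, finsupp_vmd μ (fun k => k.factorial * (n - k + 1).factorial),
    ← hn]
  symm
  apply Nat.div_eq_of_eq_mul_left (by norm_num)
  have h1 : ∀ k ∈ Finset.range (n + 1),
      n.choose k * (k.factorial * (n - k + 1).factorial) = n.factorial * (n - k + 1) := by
    intro k hk
    rw [Finset.mem_range] at hk
    have hkn : k ≤ n := by omega
    rw [Nat.factorial_succ, show n.choose k * (k.factorial * ((n - k + 1) * (n - k).factorial))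
        = (n.choose k * k.factorial * (n - k).factorial) * (n - k + 1) by ring,
      Nat.choose_mul_factorial_mul_factorial hkn]
  rw [Finset.sum_congr rfl h1, ← Finset.mul_sum]
  have h2 : ∑ k ∈ Finset.range (n + 1), (n - k + 1) = ∑ j ∈ Finset.range (n + 2), j := by
    rw [Finset.sum_range_succ' (fun j => j) (n + 1)]
    rw [← Finset.sum_range_reflect (fun j => j + 1) (n + 1)]
    simp [Nat.sub_add_cancel]
  rw [h2]
  have h3 : (∑ j ∈ Finset.range (n + 2), j) * 2 = (n + 2) * (n + 1) := by
    rw [Finset.sum_range_id_mul_two]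
    simp
  rw [mul_assoc, h3, Nat.factorial_succ, Nat.factorial_succ]
  ring
end

section
/- Let (g_μ)_{μ ∈ F} be a family of nonnegative reals indexed by multi-indices, and (c_j)_{j≥1} a sequence of nonnegative reals, such that g_0 = 1 and for every nonzero μ and every j in the support of μ, g_μ ≤ ∑_{ν ≤ μ − e_j} C(μ−e_j, ν) g_ν (|μ−ν| − 1)! c^{μ−ν}, where c^{μ−ν} = ∏_k c_k^{μ_k−ν_k}. Then g_μ ≤ |μ|! c^μ for all multi-indices μ. -/
open Finset Polynomial

private def mdeg (μ : ℕ →₀ ℕ) : ℕ := μ.sum fun _ n => n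

private lemma mdeg_add (a b : ℕ →₀ ℕ) : mdeg (a + b) = mdeg a + mdeg b :=
  Finsupp.sum_add_index' (fun _ => rfl) (fun _ _ _ => rfl)

private lemma mdeg_single (a i : ℕ) : mdeg (Finsupp.single a i) = i :=
  Finsupp.sum_single_index rfl

private lemma mdeg_sub_add {ν μ : ℕ →₀ ℕ} (h : ν ≤ μ) : mdeg (μ - ν) + mdeg ν = mdeg μ := by
  rw [← mdeg_add, tsub_add_cancel_of_le h]

private lemma mdeg_mono {ν μ : ℕ →₀ ℕ} (h : ν ≤ μ) : mdeg ν ≤ mdeg μ := by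
  rw [← mdeg_sub_add h]; exact Nat.le_add_left _ _

private lemma mdeg_eq_zero {μ : ℕ →₀ ℕ} (h : mdeg μ = 0) : μ = 0 := by
  have : ∀ k ∈ μ.support, μ k = 0 := (Finset.sum_eq_zero_iff).1 h
  ext k
  by_cases hk : k ∈ μ.support
  · exact this k hk
  · simpa using Finsupp.notMem_support_iff.1 hk

private lemma sum_Iic_single_add {M : Type*} [AddCommMonoid M] (a n : ℕ) (f : ℕ →₀ ℕ)
    (ha : a ∉ f.support) (F : (ℕ →₀ ℕ) → M) :
    ∑ ν ∈ Finset.Iic (Finsupp.single a n + f), F ν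
      = ∑ p ∈ (Finset.range (n + 1)) ×ˢ Finset.Iic f, F (Finsupp.single a p.1 + p.2) := by
  have hfa : f a = 0 := Finsupp.notMem_support_iff.1 ha
  refine Finset.sum_nbij' (i := fun ν => (ν a, ν.erase a))
    (j := fun p => Finsupp.single a p.1 + p.2) ?_ ?_ ?_ ?_ ?_
  · intro ν hν
    rw [Finset.mem_Iic] at hν
    rw [Finset.mem_product, Finset.mem_range, Finset.mem_Iic]
    constructor
    · have := hν a
      simpa [hfa] using Nat.lt_succ_of_le (by simpa [hfa] using hν a)
    · intro k
      by_cases hk : k = a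
      · simp [hk]
      · simpa [Finsupp.erase_ne hk] using (by simpa [Finsupp.single_apply, Ne.symm hk] using hν k)
  · intro p hp
    rw [Finset.mem_product, Finset.mem_range, Finset.mem_Iic] at hp
    rw [Finset.mem_Iic]
    intro k
    by_cases hk : k = a
    · subst hk
      simp [hfa, Finsupp.notMem_support_iff.1 (fun h => ha (Finsupp.support_mono hp.2 h)),
        Nat.lt_succ_iff.1 hp.1]
    · simpa [Finsupp.single_apply, Ne.symm hk] using hp.2 k
  · intro ν hν
    simp [Finsupp.single_add_erase]
  · intro p hp
    rw [Finset.mem_product, Finset.mem_range, Finset.mem_Iic] at hp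
    have hpa : p.2 a = 0 := by
      have := hp.2 a; simpa [hfa] using Nat.le_zero.1 (by simpa [hfa] using hp.2 a)
    ext
    · simp [hpa]
    · simp [Finsupp.erase_add, Finsupp.erase_single,
        Finsupp.erase_of_notMem_support (Finsupp.notMem_support_iff.2 hpa)]
  · intro ν hν
    rw [Finsupp.single_add_erase]

private lemma keyP_s3 (l : ℕ →₀ ℕ) :
    ∑ ν ∈ Finset.Iic l,
        Polynomial.C ((∏ k ∈ l.support, (l k).choose (ν k) : ℕ) : ℝ) * X ^ mdeg ν
      = (X + 1) ^ mdeg l := by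
  induction l using Finsupp.induction with
  | zero =>
    have h1 : Finset.Iic (0 : ℕ →₀ ℕ) = {0} := by
      ext ν; simp [Finset.mem_Iic, le_zero_iff]
    simp [h1, mdeg]
  | single_add a n f han hn ih =>
    have hfa : f a = 0 := Finsupp.notMem_support_iff.1 han
    have hsupp : (Finsupp.single a n + f).support = insert a f.support := by
      rw [Finsupp.support_add_eq, Finsupp.support_single_ne_zero a hn, Finset.insert_eq]
      simp [Finsupp.support_single_ne_zero a hn, Finset.disjoint_singleton_left, han]
    rw [sum_Iic_single_add a n f han, Finset.sum_product]
    have hterm : ∀ i ∈ Finset.range (n + 1), ∀ ν ∈ Finset.Iic f,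
        Polynomial.C ((∏ k ∈ (Finsupp.single a n + f).support,
            ((Finsupp.single a n + f) k).choose ((Finsupp.single a i + ν) k) : ℕ) : ℝ) *
            X ^ mdeg (Finsupp.single a i + ν)
          = (Polynomial.C ((n.choose i : ℕ) : ℝ) * X ^ i) *
            (Polynomial.C ((∏ k ∈ f.support, (f k).choose (ν k) : ℕ) : ℝ) * X ^ mdeg ν) := by
      intro i _ ν hν
      rw [Finset.mem_Iic] at hν
      have hνa : ν a = 0 := Nat.le_zero.1 (by simpa [hfa] using hν a)
      have h2 : ∏ k ∈ (Finsupp.single a n + f).support,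
          ((Finsupp.single a n + f) k).choose ((Finsupp.single a i + ν) k)
          = n.choose i * ∏ k ∈ f.support, (f k).choose (ν k) := by
        rw [hsupp, Finset.prod_insert han]
        congr 1
        · simp [hfa, hνa]
        · refine Finset.prod_congr rfl fun k hk => ?_
          have hka : k ≠ a := fun h => han (h ▸ hk)
          simp [Finsupp.single_apply, Ne.symm hka]
      rw [h2, mdeg_add, mdeg_single]
      push_cast
      rw [Polynomial.C_mul, pow_add]
      ring
    rw [Finset.sum_congr rfl (fun i hi => Finset.sum_congr rfl (hterm i hi))]
    have h3 : ∀ i ∈ Finset.range (n + 1),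
        ∑ ν ∈ Finset.Iic f, (Polynomial.C ((n.choose i : ℕ) : ℝ) * X ^ i) *
            (Polynomial.C ((∏ k ∈ f.support, (f k).choose (ν k) : ℕ) : ℝ) * X ^ mdeg ν)
          = (Polynomial.C ((n.choose i : ℕ) : ℝ) * X ^ i) * (X + 1) ^ mdeg f := by
      intro i _
      rw [← Finset.mul_sum, ih]
    rw [Finset.sum_congr rfl h3, ← Finset.sum_mul, mdeg_add, mdeg_single, pow_add]
    congr 1
    rw [add_pow]
    refine Finset.sum_congr rfl fun i _ => ?_
    simp [Polynomial.C_eq_natCast, mul_comm]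

private lemma keyB' (l : ℕ →₀ ℕ) (m : ℕ) :
    ∑ ν ∈ Finset.Iic l,
        (if m = mdeg ν then ((∏ k ∈ l.support, (l k).choose (ν k) : ℕ) : ℝ) else 0)
      = ((mdeg l).choose m : ℝ) := by
  have h := congrArg (fun p => Polynomial.coeff p m) (keyP_s3 l)
  simp only [Polynomial.finset_sum_coeff, Polynomial.coeff_C_mul, Polynomial.coeff_X_pow,
    Polynomial.coeff_X_add_one_pow, mul_ite, mul_one, mul_zero] at h
  exact h

private lemma keyB (l : ℕ →₀ ℕ) (w : ℕ → ℝ) :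
    ∑ ν ∈ Finset.Iic l, ((∏ k ∈ l.support, (l k).choose (ν k) : ℕ) : ℝ) * w (mdeg ν)
      = ∑ m ∈ Finset.range (mdeg l + 1), ((mdeg l).choose m : ℝ) * w m := by
  have h1 : ∀ ν ∈ Finset.Iic l,
      ((∏ k ∈ l.support, (l k).choose (ν k) : ℕ) : ℝ) * w (mdeg ν)
        = ∑ m ∈ Finset.range (mdeg l + 1),
            (if m = mdeg ν then ((∏ k ∈ l.support, (l k).choose (ν k) : ℕ) : ℝ) * w m else 0) := by
    intro ν hν
    rw [Finset.sum_ite_eq' (Finset.range (mdeg l + 1)) (mdeg ν)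
      (fun m => ((∏ k ∈ l.support, (l k).choose (ν k) : ℕ) : ℝ) * w m)]
    simp [Nat.lt_succ_iff, mdeg_mono (Finset.mem_Iic.1 hν)]
  rw [Finset.sum_congr rfl h1, Finset.sum_comm]
  refine Finset.sum_congr rfl fun m _ => ?_
  rw [← keyB' l m, Finset.sum_mul]
  refine Finset.sum_congr rfl fun ν _ => ?_
  by_cases h : m = mdeg ν <;> simp [h]

private lemma keyC (l : ℕ →₀ ℕ) :
    ∑ ν ∈ Finset.Iic l, ((∏ k ∈ l.support, (l k).choose (ν k) : ℕ) : ℝ) *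
        (((mdeg ν).factorial : ℝ) * ((mdeg l - mdeg ν).factorial : ℝ))
      = ((mdeg l + 1).factorial : ℝ) := by
  rw [keyB l (fun m => ((m.factorial : ℝ) * ((mdeg l - m).factorial : ℝ)))]
  have h1 : ∀ m ∈ Finset.range (mdeg l + 1),
      ((mdeg l).choose m : ℝ) * ((m.factorial : ℝ) * ((mdeg l - m).factorial : ℝ))
        = ((mdeg l).factorial : ℝ) := by
    intro m hm
    rw [Finset.mem_range, Nat.lt_succ_iff] at hm
    rw [← Nat.choose_mul_factorial_mul_factorial hm]
    push_cast; ring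
  rw [Finset.sum_congr rfl h1, Finset.sum_const, Finset.card_range, nsmul_eq_mul,
    Nat.factorial_succ]
  push_cast; ring



/-- The recurrence for the derivatives of `det(D_xΦ)` at `y = 0`: if `g_0 = 1`
and for every nonzero multi-index `μ` and every `j` in the support of `μ`,
`g_μ ≤ ∑_{ν ≤ μ−e_j} C(μ−e_j,ν) g_ν (|μ−ν|−1)! c^{μ−ν}`,
then `g_μ ≤ |μ|! c^μ` for all multi-indices `μ`. -/
theorem det_recurrence_solution (g : (ℕ →₀ ℕ) → ℝ) (c : ℕ → ℝ)
    (hg : ∀ μ, 0 ≤ g μ) (hc : ∀ j, 0 ≤ c j) (h0 : g 0 = 1)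
    (hrec : ∀ μ : ℕ →₀ ℕ, μ ≠ 0 → ∀ j ∈ μ.support,
      g μ ≤ ∑ ν ∈ Finset.Iic (μ - Finsupp.single j 1),
        ((∏ k ∈ μ.support,
            Nat.choose ((μ - Finsupp.single j 1 : ℕ →₀ ℕ) k) (ν k) : ℕ) : ℝ) * g ν *
          (Nat.factorial (((μ - ν).sum fun _ n => n) - 1) : ℝ) *
          ∏ k ∈ μ.support, c k ^ ((μ - ν) k)) :
    ∀ μ : ℕ →₀ ℕ,
      g μ ≤ (Nat.factorial (μ.sum fun _ n => n) : ℝ) *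
        ∏ k ∈ μ.support, c k ^ μ k := by
  suffices H : ∀ n (μ : ℕ →₀ ℕ), mdeg μ ≤ n →
      g μ ≤ ((mdeg μ).factorial : ℝ) * ∏ k ∈ μ.support, c k ^ μ k from
    fun μ => H (mdeg μ) μ le_rfl
  intro n
  induction n with
  | zero =>
    intro μ hμ
    have h1 : μ = 0 := mdeg_eq_zero (Nat.le_zero.1 hμ)
    subst h1
    simp [h0, mdeg]
  | succ n ih =>
    intro μ hμ
    by_cases hμ0 : μ = 0
    · subst hμ0; simp [h0, mdeg]
    · obtain ⟨j, hj⟩ := Finsupp.support_nonempty_iff.2 hμ0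
      set l := μ - Finsupp.single j 1 with hldef
      have hsle : Finsupp.single j 1 ≤ μ :=
        Finsupp.single_le_iff.2 (Nat.one_le_iff_ne_zero.2 (Finsupp.mem_support_iff.1 hj))
      have hlμ : l ≤ μ := tsub_le_self
      have hml : mdeg l + 1 = mdeg μ := by
        have h := mdeg_sub_add hsle
        simpa [mdeg_single] using h
      have hln : mdeg l ≤ n := by omega
      have hCμ : (0:ℝ) ≤ ∏ k ∈ μ.support, c k ^ μ k :=
        Finset.prod_nonneg fun k _ => pow_nonneg (hc k) _
      refine (hrec μ hμ0 j hj).trans ?_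
      have hterm : ∀ ν ∈ Finset.Iic l,
          ((∏ k ∈ μ.support, Nat.choose (l k) (ν k) : ℕ) : ℝ) * g ν *
              (Nat.factorial (((μ - ν).sum fun _ n => n) - 1) : ℝ) *
              ∏ k ∈ μ.support, c k ^ ((μ - ν) k)
            ≤ ((∏ k ∈ l.support, (l k).choose (ν k) : ℕ) : ℝ) *
                (((mdeg ν).factorial : ℝ) * ((mdeg l - mdeg ν).factorial : ℝ)) *
                ∏ k ∈ μ.support, c k ^ μ k := by
        intro ν hν
        rw [Finset.mem_Iic] at hν
        have hνμ : ν ≤ μ := hν.trans hlμ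
        have hνn : mdeg ν ≤ n := (mdeg_mono hν).trans hln
        -- the choose products agree
        have hchoose : (∏ k ∈ μ.support, Nat.choose (l k) (ν k))
            = ∏ k ∈ l.support, (l k).choose (ν k) := by
          refine (Finset.prod_subset (Finsupp.support_mono hlμ) fun k _ hk => ?_).symm
          have hlk : l k = 0 := Finsupp.notMem_support_iff.1 hk
          have hνk : ν k = 0 := Nat.le_zero.1 (hlk ▸ hν k)
          simp [hlk, hνk]
        -- the factorial index
        have hfac : ((μ - ν).sum fun _ n => n) - 1 = mdeg l - mdeg ν := by
          have h1 : mdeg (μ - ν) + mdeg ν = mdeg μ := mdeg_sub_add hνμ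
          have h2 : mdeg ν ≤ mdeg l := mdeg_mono hν
          show mdeg (μ - ν) - 1 = mdeg l - mdeg ν
          omega
        -- bound g ν
        have hgν : g ν ≤ ((mdeg ν).factorial : ℝ) * ∏ k ∈ μ.support, c k ^ ν k := by
          refine (ih ν hνn).trans (le_of_eq ?_)
          congr 1
          refine Finset.prod_subset (Finsupp.support_mono hνμ) fun k _ hk => ?_
          simp [Finsupp.notMem_support_iff.1 hk]
        -- the c-products combine
        have hcc : (∏ k ∈ μ.support, c k ^ ν k) * (∏ k ∈ μ.support, c k ^ ((μ - ν) k))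
            = ∏ k ∈ μ.support, c k ^ μ k := by
          rw [← Finset.prod_mul_distrib]
          refine Finset.prod_congr rfl fun k _ => ?_
          rw [← pow_add]
          congr 1
          have := hνμ k
          simp only [Finsupp.tsub_apply]
          omega
        calc ((∏ k ∈ μ.support, Nat.choose (l k) (ν k) : ℕ) : ℝ) * g ν *
              (Nat.factorial (((μ - ν).sum fun _ n => n) - 1) : ℝ) *
              ∏ k ∈ μ.support, c k ^ ((μ - ν) k)
            ≤ ((∏ k ∈ μ.support, Nat.choose (l k) (ν k) : ℕ) : ℝ) *
              (((mdeg ν).factorial : ℝ) * ∏ k ∈ μ.support, c k ^ ν k) *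
              (Nat.factorial (((μ - ν).sum fun _ n => n) - 1) : ℝ) *
              ∏ k ∈ μ.support, c k ^ ((μ - ν) k) := by
              refine mul_le_mul_of_nonneg_right (mul_le_mul_of_nonneg_right
                (mul_le_mul_of_nonneg_left hgν (by positivity)) (by positivity)) ?_
              exact Finset.prod_nonneg fun k _ => pow_nonneg (hc k) _
          _ = ((∏ k ∈ l.support, (l k).choose (ν k) : ℕ) : ℝ) *
                (((mdeg ν).factorial : ℝ) * ((mdeg l - mdeg ν).factorial : ℝ)) *
                ∏ k ∈ μ.support, c k ^ μ k := by
              rw [hchoose, hfac, ← hcc]; ring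
      refine (Finset.sum_le_sum hterm).trans ?_
      rw [← Finset.sum_mul, keyC l, hml]
end

section
/- Let Φ(y;x) = x + ∑_{j≥1} Φ_j(x) y_j where each Φ_j ∈ W^{1,∞}(D, ℝ^d), y ∈ Y = [−1,1]^ℕ, and suppose the functions y ↦ (D_xΦ)^{−1}(y;x) are well-defined with D_xΦ(0;x) = I_d. Then for every multi-index μ and a.e. x, the spectral norm of the partial derivative ∂^μ[(D_xΦ)^{−1}](0;x) is bounded by |μ|! · ∏_{j} |D_xΦ_j(x)|_{2,2}^{μ_j}, where |·|_{2,2} denotes the spectral (operator 2-) norm. -/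
/-- Partial derivative in the `j`-th coordinate. -/
noncomputable def pd {ι : Type*} [DecidableEq ι] (j : ι)
    (f : (ι → ℝ) → ℝ) : (ι → ℝ) → ℝ :=
  fun y => deriv (fun t => f (Function.update y j t)) (y j)

/-- Mixed partial derivative `∂^μ`, taking the partials listed in `js`. -/
noncomputable def pdMulti {ι : Type*} [DecidableEq ι] (js : List ι)
    (f : (ι → ℝ) → ℝ) : (ι → ℝ) → ℝ :=
  js.foldr pd f

/-- The spectral (operator 2-) norm of a real matrix. -/
noncomputable def spec {d : ℕ} (A : Matrix (Fin d) (Fin d) ℝ) : ℝ :=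
  ‖Matrix.toEuclideanCLM (𝕜 := ℝ) A‖

open scoped Matrix.Norms.L2Operator

lemma spec_eq_norm {d : ℕ} (A : Matrix (Fin d) (Fin d) ℝ) : spec A = ‖A‖ := rfl

lemma norm_one_matrix_le {d : ℕ} : ‖(1 : Matrix (Fin d) (Fin d) ℝ)‖ ≤ 1 := by
  rw [Matrix.cstar_norm_def, map_one]
  exact ContinuousLinearMap.norm_id_le

/-! ### Generic list helpers -/

lemma list_sum_map_neg {α : Type*} {M : Type*} [AddCommGroup M] (L : List α) (f : α → M) :
    (L.map fun x => -f x).sum = -(L.map f).sum := by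
  induction L with
  | nil => simp
  | cons a l ih => simp [ih]; abel

lemma list_sum_map_mul_left {α : Type*} {M : Type*} [NonUnitalNonAssocSemiring M]
    (L : List α) (f : α → M) (a : M) :
    (L.map fun x => a * f x).sum = a * (L.map f).sum := by
  induction L with
  | nil => simp
  | cons b l ih => simp [ih, mul_add]

lemma list_sum_map_flatMap {α β : Type*} {M : Type*} [AddCommMonoid M]
    (L : List α) (g : α → List β) (F : β → M) :
    ((L.flatMap g).map F).sum = (L.map fun a => ((g a).map F).sum).sum := by
  induction L with
  | nil => simp
  | cons a l ih => simp [List.flatMap_cons, ih]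

lemma list_sum_map_const_nat {α : Type*} (L : List α) (f : α → ℕ) (c : ℕ)
    (h : ∀ a ∈ L, f a = c) : (L.map f).sum = L.length * c := by
  induction L with
  | nil => simp
  | cons a l ih =>
    rw [List.map_cons, List.sum_cons, h a (by simp),
      ih fun b hb => h b (by simp [hb]), List.length_cons]
    ring

lemma hasDerivAt_list_sum {α : Type*} {F : Type*} [NormedAddCommGroup F] [NormedSpace ℝ F]
    (L : List α) (f : α → ℝ → F) (f' : α → F) (t : ℝ)
    (h : ∀ a ∈ L, HasDerivAt (f a) (f' a) t) :
    HasDerivAt (fun s => (L.map fun a => f a s).sum) ((L.map f').sum) t := by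
  induction L with
  | nil => simpa using hasDerivAt_const t (0 : F)
  | cons a l ih =>
    simp only [List.map_cons, List.sum_cons]
    exact (h a (by simp)).add (ih fun b hb => h b (by simp [hb]))

lemma list_norm_sum_le {α : Type*} {F : Type*} [SeminormedAddCommGroup F]
    (L : List α) (f : α → F) (C : ℝ) (h : ∀ a ∈ L, ‖f a‖ ≤ C) :
    ‖(L.map f).sum‖ ≤ L.length * C := by
  induction L with
  | nil => simp
  | cons a l ih =>
    simp only [List.map_cons, List.sum_cons, List.length_cons]
    have h1 : ‖f a + (l.map f).sum‖ ≤ ‖f a‖ + ‖(l.map f).sum‖ := norm_add_le _ _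
    have h2 : ‖(l.map f).sum‖ ≤ l.length * C := ih fun b hb => h b (by simp [hb])
    have h3 : ‖f a‖ ≤ C := h a (by simp)
    push_cast
    nlinarith [norm_nonneg (f a)]

/-! ### The combinatorics of orderings with insertions -/

/-- All orderings of a list, generated by iterated insertion. -/
def PermsIns : List ℕ → List (List ℕ)
  | [] => [[]]
  | j :: l => (PermsIns l).flatMap fun ℓ =>
      (List.range (ℓ.length + 1)).map fun r => List.insertIdx ℓ r j

lemma perm_of_mem_permsIns : ∀ {js ℓ : List ℕ}, ℓ ∈ PermsIns js → ℓ.Perm js := by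
  intro js
  induction js with
  | nil =>
    intro ℓ h
    simp only [PermsIns, List.mem_singleton] at h
    simp [h]
  | cons j l ih =>
    intro ℓ h
    simp only [PermsIns, List.mem_flatMap, List.mem_map, List.mem_range] at h
    obtain ⟨ℓ₀, hℓ₀, r, hr, rfl⟩ := h
    exact (List.perm_insertIdx j ℓ₀ (by omega)).trans ((ih hℓ₀).cons j)

lemma length_permsIns : ∀ js : List ℕ, (PermsIns js).length = js.length.factorial := by
  intro js
  induction js with
  | nil => rfl
  | cons j l ih =>
    rw [PermsIns, List.length_flatMap,
      list_sum_map_const_nat _ _ (l.length + 1) (by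
        intro ℓ hℓ
        simp [Function.comp, (perm_of_mem_permsIns hℓ).length_eq]),
      ih, List.length_cons, Nat.factorial_succ]
    ring

/-! ### Matrix-valued auxiliary functions -/

section MatAux

variable {d : ℕ} (J : ℕ → Matrix (Fin d) (Fin d) ℝ) (S : Finset ℕ)

/-- The affine family of matrices. -/
noncomputable def Mmat (y : ℕ → ℝ) : Matrix (Fin d) (Fin d) ℝ :=
  1 + ∑ j ∈ S, y j • J j

/-- Its (pointwise) matrix inverse. -/
noncomputable def Qmat (y : ℕ → ℝ) : Matrix (Fin d) (Fin d) ℝ := (Mmat J S y)⁻¹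

/-- `Qmat * J_{m₁} * Qmat * J_{m₂} * ⋯ * Qmat`. -/
noncomputable def Pmat : List ℕ → (ℕ → ℝ) → Matrix (Fin d) (Fin d) ℝ
  | [], y => Qmat J S y
  | m :: ℓ, y => Qmat J S y * J m * Pmat ℓ y

/-- The sum over all orderings. -/
noncomputable def Gmat (js : List ℕ) (y : ℕ → ℝ) : Matrix (Fin d) (Fin d) ℝ :=
  ((PermsIns js).map fun ℓ => Pmat J S ℓ y).sum

lemma Mmat_update (y : ℕ → ℝ) {j : ℕ} (hj : j ∈ S) (t : ℝ) :
    Mmat J S (Function.update y j t) = Mmat J S y + (t - y j) • J j := by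
  unfold Mmat
  rw [Finset.sum_congr rfl fun i _ => Function.apply_update (fun k v => v • J k) y j t i,
    Finset.sum_update_of_mem hj,
    Finset.sum_eq_sum_sdiff_singleton_add hj (fun i => y i • J i), sub_smul]
  abel

lemma hasDerivAt_Qmat (y : ℕ → ℝ) {j : ℕ} (hj : j ∈ S) (hu : IsUnit (Mmat J S y)) :
    HasDerivAt (fun t => Qmat J S (Function.update y j t))
      (-(Qmat J S y * J j * Qmat J S y)) (y j) := by
  have hQ : Qmat J S y = ↑hu.unit⁻¹ := by
    rw [Qmat, Matrix.nonsing_inv_eq_ringInverse]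
    have h := Ring.inverse_unit hu.unit
    rwa [hu.unit_spec] at h
  have haff : HasDerivAt (fun t : ℝ => Mmat J S y + (t - y j) • J j) (J j) (y j) := by
    simpa using (((hasDerivAt_id (y j)).sub_const (y j)).smul_const (J j)).const_add (Mmat J S y)
  have hinv := hasFDerivAt_ringInverse (𝕜 := ℝ) hu.unit
  have hval : (↑hu.unit : Matrix (Fin d) (Fin d) ℝ) = Mmat J S y + (y j - y j) • J j := by
    simp [hu.unit_spec]
  rw [hval] at hinv
  have hcomp := hinv.comp_hasDerivAt (y j) haff
  have hfun : (fun t => Qmat J S (Function.update y j t))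
      = fun t => Ring.inverse (Mmat J S y + (t - y j) • J j) := by
    funext t
    rw [Qmat, Mmat_update J S y hj t, Matrix.nonsing_inv_eq_ringInverse]
  rw [hfun, hQ]
  simpa [Function.comp_def, ContinuousLinearMap.neg_apply,
    ContinuousLinearMap.mulLeftRight_apply] using hcomp

lemma hasDerivAt_Pmat (y : ℕ → ℝ) {j : ℕ} (hj : j ∈ S) (hu : IsUnit (Mmat J S y)) :
    ∀ ℓ : List ℕ, HasDerivAt (fun t => Pmat J S ℓ (Function.update y j t))
      (-((List.range (ℓ.length + 1)).map fun r => Pmat J S (List.insertIdx ℓ r j) y).sum)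
      (y j) := by
  intro ℓ
  induction ℓ with
  | nil =>
    have h := hasDerivAt_Qmat J S y hj hu
    simpa [Pmat, List.range_succ, mul_assoc] using h
  | cons m ℓ ih =>
    have hQ := hasDerivAt_Qmat J S y hj hu
    have h1 := (hQ.mul_const (J m)).mul ih
    simp only [Function.update_eq_self] at h1
    show HasDerivAt
      (fun t => Qmat J S (Function.update y j t) * J m * Pmat J S ℓ (Function.update y j t)) _ _
    refine h1.congr_deriv ?_
    symm
    rw [List.length_cons, List.range_succ_eq_map, List.map_cons, List.map_map, List.sum_cons,
      neg_add]
    refine congrArg₂ (· + ·) ?_ ?_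
    · rw [List.insertIdx_zero]
      show -(Pmat J S (j :: m :: ℓ) y) = _
      simp [Pmat, mul_assoc]
    · rw [mul_neg]
      congr 1
      rw [← list_sum_map_mul_left]
      refine congrArg List.sum (List.map_congr_left fun r _ => ?_)
      show Pmat J S (List.insertIdx (m :: ℓ) (r + 1) j) y = _
      rw [List.insertIdx_succ_cons]
      rfl

lemma hasDerivAt_Gmat (y : ℕ → ℝ) {j : ℕ} (hj : j ∈ S) (hu : IsUnit (Mmat J S y))
    (l : List ℕ) :
    HasDerivAt (fun t => Gmat J S l (Function.update y j t)) (-(Gmat J S (j :: l) y)) (y j) := by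
  have h := hasDerivAt_list_sum (PermsIns l)
    (fun ℓ t => Pmat J S ℓ (Function.update y j t))
    (fun ℓ => -((List.range (ℓ.length + 1)).map fun r => Pmat J S (List.insertIdx ℓ r j) y).sum)
    (y j) (fun ℓ _ => hasDerivAt_Pmat J S y hj hu ℓ)
  have hval : ((PermsIns l).map fun ℓ =>
      -((List.range (ℓ.length + 1)).map fun r => Pmat J S (List.insertIdx ℓ r j) y).sum).sum
      = -(Gmat J S (j :: l) y) := by
    rw [list_sum_map_neg]
    congr 1
    rw [Gmat]
    show _ = ((PermsIns (j :: l)).map fun ℓ => Pmat J S ℓ y).sum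
    rw [PermsIns, list_sum_map_flatMap]
    refine congrArg List.sum (List.map_congr_left fun ℓ _ => ?_)
    rw [List.map_map]
    rfl
  rw [← hval]
  exact h

/-- The entry-evaluation continuous linear map. -/
noncomputable def entryCLM (i k : Fin d) : Matrix (Fin d) (Fin d) ℝ →L[ℝ] ℝ :=
  LinearMap.toContinuousLinearMap
    { toFun := fun A => A i k
      map_add' := fun _ _ => rfl
      map_smul' := fun _ _ => rfl }

lemma hasDerivAt_entry {A : ℝ → Matrix (Fin d) (Fin d) ℝ} {A' : Matrix (Fin d) (Fin d) ℝ}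
    {t : ℝ} (h : HasDerivAt A A' t) (i k : Fin d) :
    HasDerivAt (fun s => A s i k) (A' i k) t := by
  have := ((entryCLM i k).hasFDerivAt (x := A t)).comp_hasDerivAt t h
  exact this

/-- The main derivative formula, proved jointly with the locality of `pdMulti`. -/
lemma pdMulti_formula
    (hU : ∀ y : ℕ → ℝ, (∀ j ∉ S, y j = 0) → (∀ j, |y j| ≤ 1) → IsUnit (Mmat J S y))
    (Minv : (ℕ → ℝ) → Matrix (Fin d) (Fin d) ℝ)
    (hMQ : ∀ z : ℕ → ℝ, (∀ j ∉ S, z j = 0) → (∀ j, |z j| < 1) → Minv z = Qmat J S z) :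
    ∀ js : List ℕ, (∀ a ∈ js, a ∈ S) → ∀ y : ℕ → ℝ, (∀ j ∉ S, y j = 0) → (∀ j, |y j| < 1) →
      ∀ i k, pdMulti js (fun z => Minv z i k) y
        = (((-1 : ℝ) ^ js.length) • Gmat J S js y) i k := by
  intro js
  induction js with
  | nil =>
    intro _ y hy0 hy1 i k
    simp [pdMulti, Gmat, PermsIns, Pmat, hMQ y hy0 hy1]
  | cons j l ih =>
    intro hjs y hy0 hy1 i k
    have hj : j ∈ S := hjs j (List.mem_cons_self)
    have hyj : y j ∈ Set.Ioo (-1 : ℝ) 1 := by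
      have := abs_lt.mp (hy1 j); exact ⟨this.1, this.2⟩
    show deriv (fun t => pdMulti l (fun z => Minv z i k) (Function.update y j t)) (y j) = _
    have hEq : (fun t => pdMulti l (fun z => Minv z i k) (Function.update y j t))
        =ᶠ[nhds (y j)]
        fun t => (((-1 : ℝ) ^ l.length) • Gmat J S l (Function.update y j t)) i k := by
      filter_upwards [isOpen_Ioo.mem_nhds hyj] with t ht
      refine ih (fun a ha => hjs a (List.mem_cons_of_mem j ha)) _ ?_ ?_ i k
      · intro m hm
        rw [Function.update_apply]
        split_ifs with h
        · exact absurd (h ▸ hj) hm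
        · exact hy0 m hm
      · intro m
        rw [Function.update_apply]
        split_ifs with h
        · exact abs_lt.mpr ⟨ht.1, ht.2⟩
        · exact hy1 m
    rw [hEq.deriv_eq]
    have hu : IsUnit (Mmat J S y) := hU y hy0 fun m => (hy1 m).le
    have hG : HasDerivAt (fun t => ((-1 : ℝ) ^ l.length) • Gmat J S l (Function.update y j t)) _
        (y j) := (hasDerivAt_Gmat J S y hj hu l).const_smul ((-1 : ℝ) ^ l.length)
    have hG' := hasDerivAt_entry hG i k
    rw [hG'.deriv]
    rw [List.length_cons]
    simp only [Matrix.smul_apply, Matrix.neg_apply, smul_eq_mul, pow_succ]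
    ring

end MatAux

/-- For the affine family of Jacobians
`D_xΦ(y;x) = I + ∑_{j≥1} y_j D_xΦ_j(x)` (at a fixed point `x`, with
`J j = D_xΦ_j(x)`), if the inverse `y ↦ (D_xΦ)^{−1}(y;x)` is well defined on
`Y = [−1,1]^ℕ`, then for every multi-index `μ` the spectral norm of
`∂^μ[(D_xΦ)^{−1}](0;x)` is bounded by `|μ|! ∏_j |D_xΦ_j(x)|_{2,2}^{μ_j}`. -/
theorem inverse_jacobian_derivative_bound {d : ℕ}
    (J : ℕ → Matrix (Fin d) (Fin d) ℝ)
    (Minv : (ℕ → ℝ) → Matrix (Fin d) (Fin d) ℝ)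
    (hMinv : ∀ y : ℕ → ℝ, (∀ j, |y j| ≤ 1) →
      Minv y * (Matrix.of fun i k =>
        (1 : Matrix (Fin d) (Fin d) ℝ) i k + ∑' j : ℕ, y j * J j i k) = 1 ∧
      (Matrix.of fun i k =>
        (1 : Matrix (Fin d) (Fin d) ℝ) i k + ∑' j : ℕ, y j * J j i k) * Minv y = 1)
    (μ : ℕ →₀ ℕ) :
    spec (Matrix.of fun i k =>
        pdMulti (μ.support.toList.flatMap fun j => List.replicate (μ j) j)
          (fun y => Minv y i k) 0)
      ≤ (Nat.factorial (μ.sum fun _ n => n) : ℝ) *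
        ∏ j ∈ μ.support, spec (J j) ^ μ j := by
  classical
  set S : Finset ℕ := μ.support with hS
  set js : List ℕ := S.toList.flatMap fun j => List.replicate (μ j) j with hjs
  -- the matrix in the hypothesis equals `Mmat` on points supported in `S`
  have hMform : ∀ z : ℕ → ℝ, (∀ j ∉ S, z j = 0) →
      (Matrix.of fun i k =>
        (1 : Matrix (Fin d) (Fin d) ℝ) i k + ∑' j : ℕ, z j * J j i k) = Mmat J S z := by
    intro z hz
    ext i k
    rw [Matrix.of_apply, tsum_eq_sum (s := S) fun b hb => by rw [hz b hb, zero_mul]]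
    simp [Mmat, Matrix.add_apply, Matrix.sum_apply, Matrix.smul_apply, smul_eq_mul]
  have hU : ∀ z : ℕ → ℝ, (∀ j ∉ S, z j = 0) → (∀ j, |z j| ≤ 1) → IsUnit (Mmat J S z) := by
    intro z hz0 hz1
    have h2 := (hMinv z hz1).2
    have h1 := (hMinv z hz1).1
    rw [hMform z hz0] at h1 h2
    exact ⟨⟨Mmat J S z, Minv z, h2, h1⟩, rfl⟩
  have hMQ : ∀ z : ℕ → ℝ, (∀ j ∉ S, z j = 0) → (∀ j, |z j| < 1) → Minv z = Qmat J S z := by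
    intro z hz0 hz1
    have h := (hMinv z fun j => (hz1 j).le).1
    rw [hMform z hz0] at h
    exact (Matrix.inv_eq_left_inv h).symm
  have hjsS : ∀ a ∈ js, a ∈ S := by
    intro a ha
    rw [hjs] at ha
    simp only [List.mem_flatMap, List.mem_replicate] at ha
    obtain ⟨b, hb, _, rfl⟩ := ha
    exact Finset.mem_toList.mp hb
  have h0supp : ∀ j ∉ S, (0 : ℕ → ℝ) j = 0 := fun _ _ => rfl
  have h0lt : ∀ j, |(0 : ℕ → ℝ) j| < 1 := by intro j; norm_num
  have hform := pdMulti_formula J S hU Minv hMQ js hjsS 0 h0supp h0lt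
  have hMat : (Matrix.of fun i k => pdMulti js (fun y => Minv y i k) 0)
      = ((-1 : ℝ) ^ js.length) • Gmat J S js 0 := by
    ext i k
    rw [Matrix.of_apply, hform i k]
  -- norm computations at 0
  have hQ0 : Qmat J S (0 : ℕ → ℝ) = 1 := by
    simp [Qmat, Mmat]
  have hPbound : ∀ ℓ : List ℕ, ‖Pmat J S ℓ (0 : ℕ → ℝ)‖ ≤ (ℓ.map fun m => spec (J m)).prod := by
    intro ℓ
    induction ℓ with
    | nil =>
      show ‖Qmat J S (0 : ℕ → ℝ)‖ ≤ _
      rw [hQ0]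
      simpa using norm_one_matrix_le
    | cons m ℓ ih =>
      show ‖Qmat J S (0 : ℕ → ℝ) * J m * Pmat J S ℓ (0 : ℕ → ℝ)‖ ≤ _
      rw [hQ0, one_mul, List.map_cons, List.prod_cons]
      calc ‖J m * Pmat J S ℓ (0 : ℕ → ℝ)‖
          ≤ ‖J m‖ * ‖Pmat J S ℓ (0 : ℕ → ℝ)‖ := norm_mul_le _ _
        _ ≤ spec (J m) * (ℓ.map fun m => spec (J m)).prod := by
            rw [spec_eq_norm]
            exact mul_le_mul_of_nonneg_left ih (norm_nonneg _)
  have hprodjs : ((js.map fun m => spec (J m)).prod) = ∏ j ∈ S, spec (J j) ^ μ j := by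
    rw [hjs]
    have key : ∀ L : List ℕ,
        ((L.flatMap fun j => List.replicate (μ j) j).map fun m => spec (J m)).prod
          = (L.map fun j => spec (J j) ^ μ j).prod := by
      intro L
      induction L with
      | nil => simp
      | cons a L ih =>
        simp [List.flatMap_cons, List.map_append, List.prod_append, ih,
          List.map_replicate, List.prod_replicate]
    rw [key, Finset.prod_map_toList]
  have hlen : js.length = μ.sum fun _ n => n := by
    rw [hjs, List.length_flatMap]
    have : (S.toList.map (fun a => (List.replicate (μ a) a).length)) = S.toList.map μ := by
      simp [Function.comp, List.length_replicate]
    rw [this, Finset.sum_map_toList]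
    rfl
  -- per-term bound for every ordering
  have hterm : ∀ ℓ ∈ PermsIns js, ‖Pmat J S ℓ (0 : ℕ → ℝ)‖ ≤ ∏ j ∈ S, spec (J j) ^ μ j := by
    intro ℓ hℓ
    refine (hPbound ℓ).trans ?_
    rw [((perm_of_mem_permsIns hℓ).map fun m => spec (J m)).prod_eq, hprodjs]
  have hsum : ‖Gmat J S js 0‖ ≤ (PermsIns js).length * ∏ j ∈ S, spec (J j) ^ μ j :=
    list_norm_sum_le _ _ _ hterm
  rw [spec_eq_norm, hMat, norm_smul]
  have habs : ‖(-1 : ℝ) ^ js.length‖ = 1 := by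
    rw [norm_pow, norm_neg, norm_one, one_pow]
  rw [habs, one_mul]
  refine hsum.trans ?_
  rw [length_permsIns, hlen]
end

section
/- Let f : ℝ → ℝ be an L² function with Hilbert transform H(f), and let f^A = f + iH(f) be the associated analytic signal with instantaneous amplitude A(f) = |f^A|. For g(θ) = cos(θ) f(θ) or g(θ) = sin(θ) f(θ), and derivative g' = f_κ' f + f_κ f' with f_κ ∈ {cos, sin}, the pointwise bound A(g') (θ) ≤ A(f)(θ) + A(f')(θ) holds, provided the Hilbert transform commutes appropriately (Bedrosian identity applicable: f band-limited away from frequency 1). -/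
lemma amp_aux (c1 c2 x y x' y' : ℝ) (h : c1 ^ 2 + c2 ^ 2 = 1) :
    Real.sqrt ((c1 * x + c2 * x') ^ 2 + (c1 * y + c2 * y') ^ 2)
      ≤ Real.sqrt (x ^ 2 + y ^ 2) + Real.sqrt (x' ^ 2 + y' ^ 2) := by
  set a := Real.sqrt (x ^ 2 + y ^ 2) with ha
  set b := Real.sqrt (x' ^ 2 + y' ^ 2) with hb
  have ha0 : 0 ≤ a := Real.sqrt_nonneg _
  have hb0 : 0 ≤ b := Real.sqrt_nonneg _
  have ha2 : a ^ 2 = x ^ 2 + y ^ 2 := Real.sq_sqrt (by positivity)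
  have hb2 : b ^ 2 = x' ^ 2 + y' ^ 2 := Real.sq_sqrt (by positivity)
  have hcs : (x * x' + y * y') ^ 2 ≤ a ^ 2 * b ^ 2 := by
    rw [ha2, hb2]; nlinarith [sq_nonneg (x * y' - y * x')]
  have hab : |x * x' + y * y'| ≤ a * b := by
    rw [← Real.sqrt_sq (by positivity : (0:ℝ) ≤ a * b)]
    rw [← Real.sqrt_sq_eq_abs]
    exact Real.sqrt_le_sqrt (by nlinarith)
  have h1 := abs_le.mp hab
  have key : (c1 * x + c2 * x') ^ 2 + (c1 * y + c2 * y') ^ 2 ≤ (a + b) ^ 2 := by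
    nlinarith [sq_nonneg (c1 - c2), sq_nonneg (c1 + c2), sq_nonneg (a - b),
      mul_nonneg ha0 hb0, h1.1, h1.2]
  calc Real.sqrt ((c1 * x + c2 * x') ^ 2 + (c1 * y + c2 * y') ^ 2)
      ≤ Real.sqrt ((a + b) ^ 2) := Real.sqrt_le_sqrt key
    _ = a + b := Real.sqrt_sq (by positivity)

/-- Amplitude bound for the analytic signal of `(f_κ f)'` with
`f_κ ∈ {cos, sin}`: writing `H` for the Hilbert transform (`Hf`, `Hf'` are
the transforms of `f`, `f'`), under the Bedrosian identity the analytic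
signal of `g' = f_κ' f + f_κ f'` is `f_κ' (f + iHf) + f_κ (f' + iHf')`, and
its instantaneous amplitude satisfies `A(g')(θ) ≤ A(f)(θ) + A(f')(θ)`. -/
theorem analytic_signal_amplitude_bound (f Hf f' Hf' : ℝ → ℝ) (fκ : ℝ → ℝ)
    (hκ : fκ = Real.cos ∨ fκ = Real.sin) (θ : ℝ) :
    Real.sqrt ((deriv fκ θ * f θ + fκ θ * f' θ) ^ 2 +
        (deriv fκ θ * Hf θ + fκ θ * Hf' θ) ^ 2)
      ≤ Real.sqrt ((f θ) ^ 2 + (Hf θ) ^ 2) +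
        Real.sqrt ((f' θ) ^ 2 + (Hf' θ) ^ 2) := by
  have h : (deriv fκ θ) ^ 2 + (fκ θ) ^ 2 = 1 := by
    rcases hκ with rfl | rfl
    · simp [Real.deriv_cos]
    · simp [Real.deriv_sin]
  exact amp_aux _ _ _ _ _ _ h
end
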